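/- arXiv:1911.05855 — 7 statements merged into one kernel-verified Lean document; each statement's English description precedes it below -/
import Mathlib

section
/- Let n ≥ 2 and let λ : Fin n → ℝ be monotone (λ i ≤ λ j whenever i ≤ j) with 0 < λ i for every i. Then the following are equivalent: (a) for every x ∈ EuclideanSpace ℝ (Fin n) with ‖x‖ = 1 one has 4·(Σ_i x_i²·(λ i)²) < (Σ_i x_i²·(λ i))·(Σ_j λ j); (b) three times the largest value λ_{n-1} is strictly less than the sum of the remaining values, i.e. 3·λ_{n-1} < Σ_{i ≠ n-1} λ i. -/
/-!
Write `A(x) = ∑ xᵢ² λᵢ` and `Λ = λ_{n-1} = max λ`. Since `λᵢ² ≤ Λ λᵢ`, the left side of (a) is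
at most `4 Λ A(x)`, and `A(x) > 0`; so (a) holds as soon as `4 Λ < ∑ λ`, which is (b). Conversely,
the unit vector `e_{n-1}` turns (a) into `4 Λ² < Λ ∑ λ`.
-/

open Finset

section WeightedSums

variable {ι : Type*} [Fintype ι]

lemma sum_single_one_sq_mul [DecidableEq ι] (m : ι) (c : ι → ℝ) :
    ∑ i, (EuclideanSpace.single m (1 : ℝ)) i ^ 2 * c i = c m := by
  rw [Finset.sum_eq_single m]
  · simp
  · intro i _ hi
    simp [hi]
  · simp

lemma sum_sq_mul_pos {x : EuclideanSpace ℝ ι} (hx : x ≠ 0) {c : ι → ℝ}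
    (hc : ∀ i, 0 < c i) : 0 < ∑ i, x i ^ 2 * c i := by
  obtain ⟨k, hk⟩ : ∃ k, x k ≠ 0 := by
    by_contra! h
    exact hx (PiLp.ext h)
  exact Finset.sum_pos' (fun i _ => mul_nonneg (sq_nonneg _) (hc i).le)
    ⟨k, mem_univ k, mul_pos (by positivity) (hc k)⟩

lemma sum_sq_mul_sq_le (x : ι → ℝ) {c : ι → ℝ} {M : ℝ} (hc : ∀ i, 0 ≤ c i)
    (hcM : ∀ i, c i ≤ M) : ∑ i, x i ^ 2 * c i ^ 2 ≤ M * ∑ i, x i ^ 2 * c i := by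
  rw [Finset.mul_sum]
  refine Finset.sum_le_sum fun i _ => ?_
  calc x i ^ 2 * c i ^ 2 = (x i ^ 2 * c i) * c i := by ring
    _ ≤ (x i ^ 2 * c i) * M := by gcongr; exacts [mul_nonneg (sq_nonneg _) (hc i), hcM i]
    _ = M * (x i ^ 2 * c i) := mul_comm _ _

theorem forall_norm_eq_one_four_mul_lt_iff [DecidableEq ι] {c : ι → ℝ} (hc : ∀ i, 0 < c i)
    {m : ι} (hm : ∀ i, c i ≤ c m) (S : ℝ) :
    (∀ x : EuclideanSpace ℝ ι, ‖x‖ = 1 →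
        4 * (∑ i, x i ^ 2 * c i ^ 2) < (∑ i, x i ^ 2 * c i) * S) ↔ 4 * c m < S := by
  constructor
  · intro h
    have hsingle := h (EuclideanSpace.single m 1) (by simp)
    rw [sum_single_one_sq_mul, sum_single_one_sq_mul] at hsingle
    nlinarith [hc m]
  · intro h x hx
    have hA : 0 < ∑ i, x i ^ 2 * c i := sum_sq_mul_pos (by rintro rfl; simp at hx) hc
    calc 4 * (∑ i, x i ^ 2 * c i ^ 2)
        ≤ 4 * (c m * ∑ i, x i ^ 2 * c i) := by
          gcongr; exact sum_sq_mul_sq_le _ (fun i => (hc i).le) hm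
      _ < (∑ i, x i ^ 2 * c i) * S := by nlinarith

end WeightedSums

/-- Theorem 5.1 (algebraic content): a Euclidean hypersurface with principal
curvatures `0 < λ 0 ≤ ⋯ ≤ λ (n-1)` is Φ-SSU iff
`3 * λ (n-1) < λ 0 + ⋯ + λ (n-2)`. -/
theorem stmt_0 (n : ℕ) (hn : 2 ≤ n) (lam : Fin n → ℝ)
    (hmono : Monotone lam) (hpos : ∀ i, 0 < lam i) :
    (∀ x : EuclideanSpace ℝ (Fin n), ‖x‖ = 1 →
        4 * (∑ i, x i ^ 2 * lam i ^ 2) <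
          (∑ i, x i ^ 2 * lam i) * (∑ j, lam j)) ↔
      3 * lam ⟨n - 1, by omega⟩ <
        ∑ i ∈ Finset.univ.erase (⟨n - 1, by omega⟩ : Fin n), lam i := by
  have hmax : ∀ i, lam i ≤ lam ⟨n - 1, by omega⟩ := fun i => hmono (Fin.le_def.2 (by simp; omega))
  rw [forall_norm_eq_one_four_mul_lt_iff hpos hmax, Finset.sum_erase_eq_sub (mem_univ _)]
  constructor <;> intro h <;> linarith
end

section
/- Let E be a real inner product space, n ≥ 1, let B : EuclideanSpace ℝ (Fin n) → EuclideanSpace ℝ (Fin n) → E be a symmetric bilinear map, let (e_i) be the standard orthonormal basis, and let x be a unit vector. If Σ_{i=1}^{n} (4·⟨B(x,e_i),B(x,e_i)⟩ − ⟨B(x,x),B(e_i,e_i)⟩) < 0, then for every real p with 2 ≤ p ≤ 4 one has (p−2)·⟨B(x,x),B(x,x)⟩ + Σ_{i=1}^{n} (2·⟨B(x,e_i),B(x,e_i)⟩ − ⟨B(x,x),B(e_i,e_i)⟩) < 0. -/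
open scoped RealInnerProductSpace

/-!
For a unit vector `x`, Cauchy–Schwarz in the coefficients of `x` with respect to the standard basis
gives `‖B(x,x)‖² ≤ Σᵢ ‖B(x,eᵢ)‖²`. Hence for `p ≤ 4` the term `(p - 2)‖B(x,x)‖²` is at most
`2 Σᵢ ‖B(x,eᵢ)‖²`, which is exactly the difference between the Φ-SSU and the `2`-SSU functionals.
-/

theorem OrthonormalBasis.norm_apply_sq_le_norm_sq_mul_sum {ι V E : Type*} [Fintype ι]
    [NormedAddCommGroup V] [InnerProductSpace ℝ V] [NormedAddCommGroup E] [Module ℝ E]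
    [NormSMulClass ℝ E] (b : OrthonormalBasis ι ℝ V) (L : V →ₗ[ℝ] E) (x : V) :
    ‖L x‖ ^ 2 ≤ ‖x‖ ^ 2 * ∑ i, ‖L (b i)‖ ^ 2 := by
  have hLx : L x = ∑ i, ⟪b i, x⟫ • L (b i) := by
    conv_lhs => rw [← b.sum_repr' x]
    simp only [map_sum, map_smul]
  calc ‖L x‖ ^ 2
      ≤ (∑ i, |⟪b i, x⟫| * ‖L (b i)‖) ^ 2 := by
        rw [hLx]
        gcongr
        refine (norm_sum_le _ _).trans_eq ?_
        simp only [norm_smul, Real.norm_eq_abs]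
    _ ≤ (∑ i, |⟪b i, x⟫| ^ 2) * ∑ i, ‖L (b i)‖ ^ 2 := Finset.sum_mul_sq_le_sq_mul_sq _ _ _
    _ = ‖x‖ ^ 2 * ∑ i, ‖L (b i)‖ ^ 2 := by simp only [sq_abs, b.sum_sq_inner_right]

theorem stmt_3_general (E : Type*) [NormedAddCommGroup E] [InnerProductSpace ℝ E]
    (n : ℕ)
    (B : EuclideanSpace ℝ (Fin n) →ₗ[ℝ] EuclideanSpace ℝ (Fin n) →ₗ[ℝ] E)
    (e : Fin n → EuclideanSpace ℝ (Fin n))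
    (he : e = fun i => EuclideanSpace.single i (1 : ℝ))
    (x : EuclideanSpace ℝ (Fin n)) (hx : ‖x‖ = 1)
    (hPhi : (∑ i, (4 * ⟪B x (e i), B x (e i)⟫ - ⟪B x x, B (e i) (e i)⟫)) < 0) :
    ∀ p : ℝ, 2 ≤ p → p ≤ 4 →
      (p - 2) * ⟪B x x, B x x⟫ +
        (∑ i, (2 * ⟪B x (e i), B x (e i)⟫ - ⟪B x x, B (e i) (e i)⟫)) < 0 := by
  intro p hp2 hp4
  have hcs : ⟪B x x, B x x⟫ ≤ ∑ i, ⟪B x (e i), B x (e i)⟫ := by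
    have := (EuclideanSpace.basisFun (Fin n) ℝ).norm_apply_sq_le_norm_sq_mul_sum (B x) x
    simpa only [real_inner_self_eq_norm_sq, he, EuclideanSpace.basisFun_apply, hx, one_pow,
      one_mul] using this
  have hweight : (p - 2) * ⟪B x x, B x x⟫ ≤ 2 * ⟪B x x, B x x⟫ :=
    mul_le_mul_of_nonneg_right (by linarith) real_inner_self_nonneg
  have hsplit : ∑ i, (4 * ⟪B x (e i), B x (e i)⟫ - ⟪B x x, B (e i) (e i)⟫) =
      2 * ∑ i, ⟪B x (e i), B x (e i)⟫ +
        ∑ i, (2 * ⟪B x (e i), B x (e i)⟫ - ⟪B x x, B (e i) (e i)⟫) := by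
    rw [Finset.mul_sum, ← Finset.sum_add_distrib]
    exact Finset.sum_congr rfl fun i _ => by ring
  linarith

/-- Theorem 6.1(i) (pointwise content): if the Φ-SSU functional of a symmetric
second fundamental form `B` is negative at a unit vector `x`, then so is the
`p`-SSU functional for every `2 ≤ p ≤ 4`. -/
theorem stmt_3 (E : Type*) [NormedAddCommGroup E] [InnerProductSpace ℝ E]
    (n : ℕ) (hn : 1 ≤ n)
    (B : EuclideanSpace ℝ (Fin n) →ₗ[ℝ] EuclideanSpace ℝ (Fin n) →ₗ[ℝ] E)
    (hBsymm : ∀ u v, B u v = B v u)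
    (e : Fin n → EuclideanSpace ℝ (Fin n))
    (he : e = fun i => EuclideanSpace.single i (1 : ℝ))
    (x : EuclideanSpace ℝ (Fin n)) (hx : ‖x‖ = 1)
    (hPhi : (∑ i, (4 * ⟪B x (e i), B x (e i)⟫ - ⟪B x x, B (e i) (e i)⟫)) < 0) :
    ∀ p : ℝ, 2 ≤ p → p ≤ 4 →
      (p - 2) * ⟪B x x, B x x⟫ +
        (∑ i, (2 * ⟪B x (e i), B x (e i)⟫ - ⟪B x x, B (e i) (e i)⟫)) < 0 :=
  stmt_3_general E n B e he x hx hPhi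
end

section
/- Let E be a real inner product space, n ≥ 1, let B : EuclideanSpace ℝ (Fin n) → EuclideanSpace ℝ (Fin n) → E be a symmetric bilinear map, and let (e_i) be the standard orthonormal basis. If for every unit vector x one has Σ_{i=1}^{n} (4·⟨B(x,e_i),B(x,e_i)⟩ − ⟨B(x,x),B(e_i,e_i)⟩) < 0, then n > 4. -/
open scoped RealInnerProductSpace
open Filter Topology

/-!
Let `x` maximize `‖B(y, y)‖` on the unit sphere. Comparing `B(x + t w, x + t w)` with
`(1 + t²) B(x, x)` for a unit `w ⊥ x`, the `t²`-coefficient gives the second-variation inequality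
`2‖B(x, w)‖² + ⟪B(x, x), B(w, w)⟫ ≤ ‖B(x, x)‖²`. The `Φ`-SSU sum is a trace, so it may be computed
in an orthonormal basis starting with `x`; there the `x`-term is `3‖B(x, x)‖²` and every other term
is at least `-‖B(x, x)‖²`, so the sum is at least `(4 - n)‖B(x, x)‖²`, which must be negative.
-/

lemma nonpos_of_forall_mul_sq_add_mul_pow_four_nonpos {a b : ℝ}
    (h : ∀ t : ℝ, a * t ^ 2 + b * t ^ 4 ≤ 0) : a ≤ 0 := by
  have hle : ∀ t ∈ ({0}ᶜ : Set ℝ), a ≤ -b * t ^ 2 := by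
    intro t ht
    have ht : t ≠ 0 := ht
    have ht2 : 0 < t ^ 2 := by positivity
    nlinarith [h t]
  have hlim : Tendsto (fun t : ℝ => -b * t ^ 2) (𝓝[≠] 0) (𝓝 0) :=
    ((continuous_const.mul (continuous_pow 2)).tendsto' 0 0 (by simp)).mono_left
      nhdsWithin_le_nhds
  exact ge_of_tendsto hlim (eventually_mem_nhdsWithin.mono hle)

lemma LinearMap.continuous_apply_self {𝕜 V F : Type*} [NontriviallyNormedField 𝕜]
    [CompleteSpace 𝕜] [NormedAddCommGroup V] [NormedSpace 𝕜 V] [FiniteDimensional 𝕜 V]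
    [NormedAddCommGroup F] [NormedSpace 𝕜 F] (B : V →ₗ[𝕜] V →ₗ[𝕜] F) :
    Continuous fun y => B y y :=
  let B' : V →L[𝕜] V →L[𝕜] F :=
    LinearMap.toContinuousLinearMap (LinearMap.toContinuousLinearMap.toLinearMap ∘ₗ B)
  B'.continuous₂.comp (continuous_id.prodMk continuous_id)

lemma OrthonormalBasis.sum_apply_self_eq {ι ι' V M : Type*} [Fintype ι] [Fintype ι']
    [NormedAddCommGroup V] [InnerProductSpace ℝ V] [AddCommMonoid M] [Module ℝ M]
    (T : V →ₗ[ℝ] V →ₗ[ℝ] M) (b : OrthonormalBasis ι ℝ V) (c : OrthonormalBasis ι' ℝ V) :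
    ∑ i, T (b i) (b i) = ∑ j, T (c j) (c j) :=
  calc ∑ i, T (b i) (b i) = ∑ i, T (∑ j, ⟪c j, b i⟫ • c j) (b i) := by
        simp only [c.sum_repr']
    _ = ∑ j, T (c j) (∑ i, ⟪b i, c j⟫ • b i) := by
        simp only [map_sum, map_smul, LinearMap.sum_apply, LinearMap.smul_apply,
          real_inner_comm (c _)]
        exact Finset.sum_comm
    _ = ∑ j, T (c j) (c j) := by simp only [b.sum_repr']

lemma exists_orthonormalBasis_apply_eq {ι V : Type*} [Fintype ι] [NormedAddCommGroup V]
    [InnerProductSpace ℝ V] [FiniteDimensional ℝ V] (hcard : Module.finrank ℝ V = Fintype.card ι)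
    {x : V} (hx : ‖x‖ = 1) (i₀ : ι) : ∃ b : OrthonormalBasis ι ℝ V, b i₀ = x := by
  have hon : Orthonormal ℝ (Set.domRestrict {i₀} fun _ => x) :=
    ⟨fun _ => hx, fun i j hij => absurd (Subsingleton.elim i j) hij⟩
  obtain ⟨b, hb⟩ := hon.exists_orthonormalBasis_extension_of_card_eq hcard
  exact ⟨b, hb i₀ rfl⟩

section

variable {V F : Type*} [NormedAddCommGroup V] [InnerProductSpace ℝ V]
  [NormedAddCommGroup F] [InnerProductSpace ℝ F] (B : V →ₗ[ℝ] V →ₗ[ℝ] F)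

lemma norm_apply_self_le_of_isMaxOn {x : V}
    (hmax : IsMaxOn (fun y => ‖B y y‖) (Metric.sphere 0 1) x) (v : V) :
    ‖B v v‖ ≤ ‖B x x‖ * ‖v‖ ^ 2 := by
  rcases eq_or_ne v 0 with rfl | hv
  · simp
  have hv' : 0 < ‖v‖ := norm_pos_iff.mpr hv
  have hu : ‖v‖⁻¹ • v ∈ Metric.sphere (0 : V) 1 := by simp [norm_smul, hv]
  have h : ‖B (‖v‖⁻¹ • v) (‖v‖⁻¹ • v)‖ ≤ ‖B x x‖ := hmax hu
  simp only [map_smul, LinearMap.smul_apply, smul_smul, norm_smul] at h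
  rw [← mul_inv, ← sq, norm_inv, norm_pow, norm_norm, inv_mul_le_iff₀ (by positivity)] at h
  linarith

lemma apply_add_smul_self {x w : V} (hwx : B w x = B x w) (t : ℝ) :
    B (x + t • w) (x + t • w) = B x x + (2 * t) • B x w + t ^ 2 • B w w := by
  simp only [map_add, map_smul, LinearMap.add_apply, LinearMap.smul_apply, hwx]
  module

lemma two_mul_norm_sq_add_inner_le_of_isMaxOn (hsymm : ∀ u v, B u v = B v u) {x w : V}
    (hmax : IsMaxOn (fun y => ‖B y y‖) (Metric.sphere 0 1) x) (hx : ‖x‖ = 1) (hw : ‖w‖ = 1)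
    (hxw : ⟪x, w⟫ = 0) :
    2 * ‖B x w‖ ^ 2 + ⟪B x x, B w w⟫ ≤ ‖B x x‖ ^ 2 := by
  have hbound : ∀ t : ℝ, ‖B (x + t • w) (x + t • w)‖ ^ 2 ≤ (1 + t ^ 2) ^ 2 * ‖B x x‖ ^ 2 := by
    intro t
    have hnorm : ‖x + t • w‖ ^ 2 = 1 + t ^ 2 := by
      rw [norm_add_sq_real, real_inner_smul_right, hxw, norm_smul, hx, hw]
      simp
    have h := norm_apply_self_le_of_isMaxOn B hmax (x + t • w)
    rw [hnorm] at h
    nlinarith [norm_nonneg (B (x + t • w) (x + t • w))]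
  have hexpand : ∀ t : ℝ, ‖B (x + t • w) (x + t • w)‖ ^ 2 = ‖B x x‖ ^ 2
      + 4 * t * ⟪B x x, B x w⟫ + t ^ 2 * (4 * ‖B x w‖ ^ 2 + 2 * ⟪B x x, B w w⟫)
      + 4 * t ^ 3 * ⟪B x w, B w w⟫ + t ^ 4 * ‖B w w‖ ^ 2 := by
    intro t
    rw [apply_add_smul_self B (hsymm w x), ← real_inner_self_eq_norm_sq]
    simp only [inner_add_left, inner_add_right, real_inner_smul_left, real_inner_smul_right,
      real_inner_self_eq_norm_sq, real_inner_comm (B x x), real_inner_comm (B x w) (B w w),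
      norm_smul, mul_pow, Real.norm_eq_abs, sq_abs]
    ring
  have h := nonpos_of_forall_mul_sq_add_mul_pow_four_nonpos
    (a := 4 * ‖B x w‖ ^ 2 + 2 * ⟪B x x, B w w⟫ - 2 * ‖B x x‖ ^ 2)
    (b := ‖B w w‖ ^ 2 - ‖B x x‖ ^ 2) fun t => by
      linear_combination (hbound t + hbound (-t) - hexpand t - hexpand (-t)) / 2
  linarith

-- Its trace over an orthonormal basis is the quantity `F(x)` of the `Φ`-SSU condition.
noncomputable def phiForm (x : V) : V →ₗ[ℝ] V →ₗ[ℝ] ℝ :=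
  4 • (innerₗ F).compl₁₂ (B x) (B x) - B.compr₂ (innerₗ F (B x x))

lemma phiForm_apply (x u v : V) : phiForm B x u v = 4 * ⟪B x u, B x v⟫ - ⟪B x x, B u v⟫ := by
  simp [phiForm]

lemma four_sub_card_mul_norm_sq_le_sum_phiForm {ι : Type*} [Fintype ι]
    (hsymm : ∀ u v, B u v = B v u) {x : V}
    (hmax : IsMaxOn (fun y => ‖B y y‖) (Metric.sphere 0 1) x)
    (b : OrthonormalBasis ι ℝ V) {i₀ : ι} (hb : b i₀ = x) :
    (4 - Fintype.card ι : ℝ) * ‖B x x‖ ^ 2 ≤ ∑ i, phiForm B x (b i) (b i) := by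
  classical
  have hterm : ∀ i, -‖B x x‖ ^ 2 + (if i = i₀ then 4 * ‖B x x‖ ^ 2 else 0)
      ≤ phiForm B x (b i) (b i) := by
    intro i
    rw [phiForm_apply]
    split_ifs with hi
    · rw [hi, hb, real_inner_self_eq_norm_sq]
      linarith
    · have hx : ‖x‖ = 1 := hb ▸ b.orthonormal.1 i₀
      have hxw : ⟪x, b i⟫ = 0 := hb ▸ b.orthonormal.2 (Ne.symm hi)
      have h := two_mul_norm_sq_add_inner_le_of_isMaxOn B hsymm hmax hx (b.orthonormal.1 i) hxw
      rw [real_inner_self_eq_norm_sq]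
      nlinarith [sq_nonneg ‖B x (b i)‖]
  calc (4 - Fintype.card ι : ℝ) * ‖B x x‖ ^ 2
      = ∑ i, (-‖B x x‖ ^ 2 + if i = i₀ then 4 * ‖B x x‖ ^ 2 else 0) := by
        simp only [Finset.sum_add_distrib, Finset.sum_const, Finset.sum_ite_eq', Finset.mem_univ,
          if_true, Finset.card_univ, nsmul_eq_mul]
        ring
    _ ≤ ∑ i, phiForm B x (b i) (b i) := Finset.sum_le_sum fun i _ => hterm i

end

/-- Theorem 7.1 (algebraic content): if a symmetric bilinear map `B`
(the second fundamental form) satisfies the Φ-SSU condition at every unit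
vector, then `n > 4`. -/
theorem stmt_4 (E : Type*) [NormedAddCommGroup E] [InnerProductSpace ℝ E]
    (n : ℕ) (hn : 1 ≤ n)
    (B : EuclideanSpace ℝ (Fin n) →ₗ[ℝ] EuclideanSpace ℝ (Fin n) →ₗ[ℝ] E)
    (hBsymm : ∀ u v, B u v = B v u)
    (e : Fin n → EuclideanSpace ℝ (Fin n))
    (he : e = fun i => EuclideanSpace.single i (1 : ℝ))
    (hPhi : ∀ x : EuclideanSpace ℝ (Fin n), ‖x‖ = 1 →
      (∑ i, (4 * ⟪B x (e i), B x (e i)⟫ - ⟪B x x, B (e i) (e i)⟫)) < 0) :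
    4 < n := by
  subst he
  let i₀ : Fin n := ⟨0, hn⟩
  have hsphere : (Metric.sphere (0 : EuclideanSpace ℝ (Fin n)) 1).Nonempty :=
    ⟨EuclideanSpace.single i₀ 1, by simp⟩
  obtain ⟨x, hx, hmax⟩ := (isCompact_sphere 0 1).exists_isMaxOn hsphere
    (B.continuous_apply_self.norm.continuousOn)
  have hx1 : ‖x‖ = 1 := mem_sphere_zero_iff_norm.mp hx
  obtain ⟨b, hb⟩ := exists_orthonormalBasis_apply_eq (by simp) hx1 i₀
  have hneg : ∑ i, phiForm B x (b i) (b i) < 0 := by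
    rw [b.sum_apply_self_eq _ (EuclideanSpace.basisFun (Fin n) ℝ)]
    simpa [phiForm_apply] using hPhi x hx1
  have hbound := four_sub_card_mul_norm_sq_le_sum_phiForm B hBsymm hmax b hb
  rw [Fintype.card_fin] at hbound
  by_contra! hn4
  have hn4' : (n : ℝ) ≤ 4 := by exact_mod_cast hn4
  nlinarith [sq_nonneg ‖B x x‖]
end

section
/- Let E be a real inner product space, n ≥ 1, and let B : EuclideanSpace ℝ (Fin n) → EuclideanSpace ℝ (Fin n) → E be a symmetric bilinear map. Suppose x is a unit vector at which the function y ↦ ‖B(y,y)‖² attains its maximum over the unit sphere, i.e. ‖B(y,y)‖ ≤ ‖B(x,x)‖ for every unit vector y. Then for every unit vector y orthogonal to x one has ‖B(x,x)‖² ≥ 2·‖B(x,y)‖² + ⟨B(x,x),B(y,y)⟩. -/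
/-!
Along the great circle `t ↦ a • x + b • y` (`a² + b² = 1`) the maximality of `x` bounds
`‖a² B(x,x) + 2ab B(x,y) + b² B(y,y)‖` by `‖B(x,x)‖`. Averaging over `b` and `-b` with the
parallelogram law removes the odd terms; with `s = b²` what remains is
`s · (2 (2‖B(x,y)‖² + ⟪B(x,x), B(y,y)⟫ - ‖B(x,x)‖²) + O(s)) ≤ 0`, and letting `s → 0⁺`
gives the inequality. This is the second-derivative test at `t = 0`, done without derivatives.
-/

open Filter Set Topology
open scoped RealInnerProductSpace

lemma nonpos_of_forall_mem_Ioo_add_mul_nonpos {c m : ℝ}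
    (h : ∀ s ∈ Ioo (0 : ℝ) 1, c + s * m ≤ 0) : c ≤ 0 := by
  have hlim : Tendsto (fun s : ℝ => c + s * m) (𝓝[>] 0) (𝓝 c) :=
    tendsto_nhdsWithin_of_tendsto_nhds (Continuous.tendsto' (by fun_prop) 0 c (by simp))
  exact le_of_tendsto hlim (eventually_of_mem (Ioo_mem_nhdsGT one_pos) h)

lemma LinearMap.map_smul_add_smul_self_of_symm {R M N : Type*} [CommSemiring R]
    [AddCommMonoid M] [Module R M] [AddCommMonoid N] [Module R N]
    (B : M →ₗ[R] M →ₗ[R] N) (hB : ∀ u v, B u v = B v u) (x y : M) (a b : R) :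
    B (a • x + b • y) (a • x + b • y) = a ^ 2 • B x x + (2 * a * b) • B x y + b ^ 2 • B y y := by
  simp only [map_add, map_smul, LinearMap.add_apply, LinearMap.smul_apply, hB y x]
  module

section InnerProductSpace

variable {F : Type*} [SeminormedAddCommGroup F] [InnerProductSpace ℝ F]

lemma norm_smul_add_smul_of_orthonormal {x y : F} (hx : ‖x‖ = 1) (hy : ‖y‖ = 1)
    (hxy : ⟪x, y⟫ = 0) {a b : ℝ} (hab : a ^ 2 + b ^ 2 = 1) : ‖a • x + b • y‖ = 1 := by
  have hperp : ⟪a • x, b • y⟫ = 0 := by simp [real_inner_smul_left, real_inner_smul_right, hxy]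
  have hsq : ‖a • x + b • y‖ ^ 2 = 1 := by
    rw [sq, norm_add_sq_eq_norm_sq_add_norm_sq_real hperp, norm_smul, norm_smul, hx, hy]
    simpa [← sq] using hab
  exact (pow_eq_one_iff_of_nonneg (norm_nonneg _) two_ne_zero).mp hsq

lemma norm_sq_add_norm_sq_le_of_norm_add_le_of_norm_sub_le {p r : F} {c : ℝ}
    (hadd : ‖p + r‖ ≤ c) (hsub : ‖p - r‖ ≤ c) : ‖p‖ ^ 2 + ‖r‖ ^ 2 ≤ c ^ 2 := by
  have := parallelogram_law_with_norm ℝ p r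
  nlinarith [pow_le_pow_left₀ (norm_nonneg _) hadd 2, pow_le_pow_left₀ (norm_nonneg _) hsub 2]

lemma two_mul_norm_sq_add_inner_le_of_forall_norm_le {u v w : F}
    (h : ∀ a b : ℝ, a ^ 2 + b ^ 2 = 1 → ‖a ^ 2 • u + (2 * a * b) • v + b ^ 2 • w‖ ≤ ‖u‖) :
    2 * ‖v‖ ^ 2 + ⟪u, w⟫ ≤ ‖u‖ ^ 2 := by
  suffices hlin : 2 * (2 * ‖v‖ ^ 2 + ⟪u, w⟫ - ‖u‖ ^ 2) ≤ 0 by linarith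
  refine nonpos_of_forall_mem_Ioo_add_mul_nonpos (m := ‖u‖ ^ 2 + ‖w‖ ^ 2 - 2 * ⟪u, w⟫ - 4 * ‖v‖ ^ 2)
    fun s ⟨hs0, hs1⟩ => ?_
  set a := √(1 - s)
  set b := √s
  have ha : a ^ 2 = 1 - s := Real.sq_sqrt (by linarith)
  have hb : b ^ 2 = s := Real.sq_sqrt hs0.le
  have hab : a ^ 2 + b ^ 2 = 1 := by rw [ha, hb]; ring
  have hbound := norm_sq_add_norm_sq_le_of_norm_add_le_of_norm_sub_le
    (p := a ^ 2 • u + b ^ 2 • w) (r := (2 * a * b) • v)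
    (by convert h a b hab using 2; abel)
    (by convert h a (-b) (by rwa [neg_sq]) using 2; rw [neg_sq]; module)
  rw [norm_add_sq_real, norm_smul, norm_smul, norm_smul, real_inner_smul_left,
    real_inner_smul_right] at hbound
  simp only [Real.norm_eq_abs, mul_pow, sq_abs, abs_pow] at hbound
  rw [ha, hb] at hbound
  refine nonpos_of_mul_nonpos_right (a := s) ?_ hs0
  linear_combination hbound

end InnerProductSpace

theorem stmt_5_general (E : Type*) [NormedAddCommGroup E] [InnerProductSpace ℝ E]
    (n : ℕ)
    (B : EuclideanSpace ℝ (Fin n) →ₗ[ℝ] EuclideanSpace ℝ (Fin n) →ₗ[ℝ] E)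
    (hBsymm : ∀ u v, B u v = B v u)
    (x : EuclideanSpace ℝ (Fin n)) (hx : ‖x‖ = 1)
    (hmax : ∀ y : EuclideanSpace ℝ (Fin n), ‖y‖ = 1 → ‖B y y‖ ≤ ‖B x x‖) :
    ∀ y : EuclideanSpace ℝ (Fin n), ‖y‖ = 1 → ⟪x, y⟫ = 0 →
      2 * ‖B x y‖ ^ 2 + ⟪B x x, B y y⟫ ≤ ‖B x x‖ ^ 2 := by
  intro y hy hxy
  refine two_mul_norm_sq_add_inner_le_of_forall_norm_le fun a b hab => ?_
  rw [← B.map_smul_add_smul_self_of_symm hBsymm]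
  exact hmax _ (norm_smul_add_smul_of_orthonormal hx hy hxy hab)

/-- Inequality (7.1): the second-derivative test at a maximizer of
`y ↦ ‖B(y,y)‖²` over the unit sphere. -/
theorem stmt_5 (E : Type*) [NormedAddCommGroup E] [InnerProductSpace ℝ E]
    (n : ℕ) (hn : 1 ≤ n)
    (B : EuclideanSpace ℝ (Fin n) →ₗ[ℝ] EuclideanSpace ℝ (Fin n) →ₗ[ℝ] E)
    (hBsymm : ∀ u v, B u v = B v u)
    (x : EuclideanSpace ℝ (Fin n)) (hx : ‖x‖ = 1)
    (hmax : ∀ y : EuclideanSpace ℝ (Fin n), ‖y‖ = 1 → ‖B y y‖ ≤ ‖B x x‖) :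
    ∀ y : EuclideanSpace ℝ (Fin n), ‖y‖ = 1 → ⟪x, y⟫ = 0 →
      2 * ‖B x y‖ ^ 2 + ⟪B x x, B y y⟫ ≤ ‖B x x‖ ^ 2 :=
  stmt_5_general E n B hBsymm x hx hmax
end

section
/- Let E be a real inner product space, let k > 4 be a natural number, let ν ∈ E be a unit vector, and let B₁ : EuclideanSpace ℝ (Fin k) → EuclideanSpace ℝ (Fin k) → E be a symmetric bilinear map with ⟨B₁(u,v),ν⟩ = 0 for all u,v. Define B(u,v) := B₁(u,v) + ⟨u,v⟩·ν and Q := Σ_{i,j=1}^{k} ‖B₁(e_i,e_j)‖², where (e_i) is the standard orthonormal basis. If Q < (k−4)/(√k + 4), then for every unit vector x one has Σ_{i=1}^{k} (4·⟨B(x,e_i),B(x,e_i)⟩ − ⟨B(x,x),B(e_i,e_i)⟩) < 0. -/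
open scoped RealInnerProductSpace
open Finset
open EuclideanSpace (single)

/-!
Write `e i` for the standard basis, `S = ∑ i, ‖B₁ x (e i)‖²` and `H = ∑ i, B₁ (e i) (e i)`.
Since `B₁ ⟂ ν` and `‖ν‖ = 1`, the sum to be estimated equals `4 S + 4 - ⟪B₁ x x, H⟫ - k` for a
unit vector `x`. Expanding `x` in the basis and applying Cauchy–Schwarz gives `‖B₁ x x‖² ≤ S ≤ Q`
and `‖H‖² ≤ k Q`, hence `|⟪B₁ x x, H⟫| ≤ √k Q`, and the sum is at most `(√k + 4) Q - (k - 4) < 0`.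
-/

section Norms

variable {ι E : Type*} [Fintype ι] [NormedAddCommGroup E] [NormedSpace ℝ E]

theorem norm_sum_smul_sq_le (c : ι → ℝ) (v : ι → E) :
    ‖∑ i, c i • v i‖ ^ 2 ≤ (∑ i, c i ^ 2) * ∑ i, ‖v i‖ ^ 2 :=
  calc ‖∑ i, c i • v i‖ ^ 2 ≤ (∑ i, |c i| * ‖v i‖) ^ 2 := by
        gcongr
        exact (norm_sum_le _ _).trans_eq (by simp [norm_smul])
    _ ≤ (∑ i, |c i| ^ 2) * ∑ i, ‖v i‖ ^ 2 := sum_mul_sq_le_sq_mul_sq _ _ _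
    _ = (∑ i, c i ^ 2) * ∑ i, ‖v i‖ ^ 2 := by simp_rw [sq_abs]

theorem norm_sum_sq_le_card_mul (v : ι → E) :
    ‖∑ i, v i‖ ^ 2 ≤ Fintype.card ι * ∑ i, ‖v i‖ ^ 2 := by
  simpa using norm_sum_smul_sq_le (fun _ => (1 : ℝ)) v

theorem EuclideanSpace.norm_linearMap_apply_sq_le [DecidableEq ι] (L : EuclideanSpace ℝ ι →ₗ[ℝ] E)
    (x : EuclideanSpace ℝ ι) :
    ‖L x‖ ^ 2 ≤ ‖x‖ ^ 2 * ∑ i, ‖L (single i 1)‖ ^ 2 := by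
  have hx : x = ∑ i, x i • single i (1 : ℝ) := by
    simpa using ((EuclideanSpace.basisFun ι ℝ).sum_repr x).symm
  conv_lhs => rw [hx]
  simpa [EuclideanSpace.real_norm_sq_eq] using
    norm_sum_smul_sq_le (fun i => x i) (fun i => L (single i 1))

end Norms

section Bilinear

variable {ι E : Type*} [Fintype ι] [DecidableEq ι] [NormedAddCommGroup E] [NormedSpace ℝ E]
  (B₁ : EuclideanSpace ℝ ι →ₗ[ℝ] EuclideanSpace ℝ ι →ₗ[ℝ] E)

theorem sum_norm_apply_single_sq_le (x : EuclideanSpace ℝ ι) :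
    ∑ j, ‖B₁ x (single j 1)‖ ^ 2 ≤ ‖x‖ ^ 2 * ∑ i, ∑ j, ‖B₁ (single i 1) (single j 1)‖ ^ 2 := by
  rw [sum_comm, mul_sum]
  exact sum_le_sum fun j _ =>
    EuclideanSpace.norm_linearMap_apply_sq_le (B₁.flip (single j 1)) x

theorem norm_sum_apply_single_single_sq_le :
    ‖∑ i, B₁ (single i 1) (single i 1)‖ ^ 2 ≤
      Fintype.card ι * ∑ i, ∑ j, ‖B₁ (single i 1) (single j 1)‖ ^ 2 := by
  refine (norm_sum_sq_le_card_mul _).trans (mul_le_mul_of_nonneg_left ?_ (Nat.cast_nonneg _))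
  exact sum_le_sum fun i _ =>
    single_le_sum (f := fun j => ‖B₁ (single i 1) (single j 1)‖ ^ 2)
      (fun j _ => sq_nonneg _) (mem_univ i)

end Bilinear

section InnerProduct

variable {F : Type*} [NormedAddCommGroup F] [InnerProductSpace ℝ F]

theorem inner_add_smul_add_smul_of_inner_eq_zero {a b ν : F} (hν : ‖ν‖ = 1)
    (ha : ⟪a, ν⟫ = 0) (hb : ⟪b, ν⟫ = 0) (s t : ℝ) :
    ⟪a + s • ν, b + t • ν⟫ = ⟪a, b⟫ + s * t := by
  have hb' : ⟪ν, b⟫ = 0 := by rwa [real_inner_comm]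
  simp only [inner_add_left, inner_add_right, real_inner_smul_left, real_inner_smul_right, ha, hb',
    real_inner_self_eq_norm_sq, hν]
  ring

theorem abs_real_inner_le_sqrt_mul {a b : F} {c Q : ℝ} (ha : ‖a‖ ^ 2 ≤ Q) (hb : ‖b‖ ^ 2 ≤ c * Q) :
    |⟪a, b⟫| ≤ √c * Q := by
  have hQ : 0 ≤ Q := (sq_nonneg _).trans ha
  calc |⟪a, b⟫| ≤ ‖a‖ * ‖b‖ := abs_real_inner_le_norm a b
    _ = √(‖a‖ ^ 2 * ‖b‖ ^ 2) := by rw [← mul_pow, Real.sqrt_sq (by positivity)]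
    _ ≤ √(Q * (c * Q)) := by gcongr
    _ = √c * Q := by
        rw [show Q * (c * Q) = c * Q ^ 2 by ring, Real.sqrt_mul' _ (sq_nonneg Q),
          Real.sqrt_sq hQ]

end InnerProduct

theorem sum_four_inner_sub_inner_eq {ι F : Type*} [Fintype ι] [DecidableEq ι]
    [NormedAddCommGroup F] [InnerProductSpace ℝ F] {ν : F} (hν : ‖ν‖ = 1)
    (B₁ : EuclideanSpace ℝ ι →ₗ[ℝ] EuclideanSpace ℝ ι →ₗ[ℝ] F) (hB₁ν : ∀ u v, ⟪B₁ u v, ν⟫ = 0)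
    (x : EuclideanSpace ℝ ι) :
    ∑ i, (4 * ⟪B₁ x (single i 1) + ⟪x, single i 1⟫ • ν, B₁ x (single i 1) + ⟪x, single i 1⟫ • ν⟫ -
        ⟪B₁ x x + ⟪x, x⟫ • ν, B₁ (single i 1) (single i 1) + ⟪single i 1, single i (1 : ℝ)⟫ • ν⟫) =
      4 * ∑ i, ‖B₁ x (single i 1)‖ ^ 2 + 4 * ‖x‖ ^ 2 - ⟪B₁ x x, ∑ i, B₁ (single i 1) (single i 1)⟫ -
        ‖x‖ ^ 2 * Fintype.card ι := by
  simp only [inner_add_smul_add_smul_of_inner_eq_zero hν (hB₁ν _ _) (hB₁ν _ _),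
    real_inner_self_eq_norm_sq, EuclideanSpace.inner_single_right, inner_sum,
    EuclideanSpace.real_norm_sq_eq, sum_sub_distrib, sum_add_distrib, ← mul_sum, Real.ringHom_apply,
    ← sq, PiLp.single_eq_same, sum_const, card_univ, nsmul_eq_mul, one_mul]
  ring

theorem stmt_6_general (E : Type*) [NormedAddCommGroup E] [InnerProductSpace ℝ E]
    (k : ℕ)
    (ν : E) (hν : ‖ν‖ = 1)
    (B₁ : EuclideanSpace ℝ (Fin k) →ₗ[ℝ] EuclideanSpace ℝ (Fin k) →ₗ[ℝ] E)
    (hB₁perp : ∀ u v, ⟪B₁ u v, ν⟫ = 0)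
    (B : EuclideanSpace ℝ (Fin k) → EuclideanSpace ℝ (Fin k) → E)
    (hB : ∀ u v, B u v = B₁ u v + ⟪u, v⟫ • ν)
    (e : Fin k → EuclideanSpace ℝ (Fin k))
    (he : e = fun i => EuclideanSpace.single i (1 : ℝ))
    (Q : ℝ) (hQ : Q = ∑ i, ∑ j, ‖B₁ (e i) (e j)‖ ^ 2)
    (hsmall : Q < ((k : ℝ) - 4) / (Real.sqrt k + 4)) :
    ∀ x : EuclideanSpace ℝ (Fin k), ‖x‖ = 1 →
      (∑ i, (4 * ⟪B x (e i), B x (e i)⟫ - ⟪B x x, B (e i) (e i)⟫)) < 0 := by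
  intro x hx
  obtain rfl : B = fun u v => B₁ u v + ⟪u, v⟫ • ν := funext₂ hB
  subst he
  beta_reduce at hQ ⊢
  rw [sum_four_inner_sub_inner_eq hν B₁ hB₁perp x, hx, Fintype.card_fin]
  set S := ∑ i, ‖B₁ x (single i 1)‖ ^ 2
  set H := ∑ i, B₁ (single i 1) (single i 1)
  have hSQ : S ≤ Q := by simpa [hx, ← hQ] using sum_norm_apply_single_sq_le B₁ x
  have hBxx : ‖B₁ x x‖ ^ 2 ≤ S := by
    simpa [hx] using EuclideanSpace.norm_linearMap_apply_sq_le (B₁ x) x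
  have hHQ : ‖H‖ ^ 2 ≤ k * Q := by simpa [← hQ] using norm_sum_apply_single_single_sq_le B₁
  have hcross : |⟪B₁ x x, H⟫| ≤ √k * Q := abs_real_inner_le_sqrt_mul (hBxx.trans hSQ) hHQ
  have hQk : Q * (√k + 4) < k - 4 := (lt_div_iff₀ (by positivity)).mp hsmall
  linarith [neg_abs_le ⟪B₁ x x, H⟫]

/-- Section 5, last theorem (pointwise content): a `k`-submanifold (`k > 4`)
of the unit sphere whose spherical second fundamental form `B₁` satisfies
`‖B₁‖² < (k-4)/(√k+4)` is Φ-SSU. Here `B u v = B₁ u v + ⟪u,v⟫ ν`. -/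
theorem stmt_6 (E : Type*) [NormedAddCommGroup E] [InnerProductSpace ℝ E]
    (k : ℕ) (hk : 4 < k)
    (ν : E) (hν : ‖ν‖ = 1)
    (B₁ : EuclideanSpace ℝ (Fin k) →ₗ[ℝ] EuclideanSpace ℝ (Fin k) →ₗ[ℝ] E)
    (hB₁symm : ∀ u v, B₁ u v = B₁ v u)
    (hB₁perp : ∀ u v, ⟪B₁ u v, ν⟫ = 0)
    (B : EuclideanSpace ℝ (Fin k) → EuclideanSpace ℝ (Fin k) → E)
    (hB : ∀ u v, B u v = B₁ u v + ⟪u, v⟫ • ν)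
    (e : Fin k → EuclideanSpace ℝ (Fin k))
    (he : e = fun i => EuclideanSpace.single i (1 : ℝ))
    (Q : ℝ) (hQ : Q = ∑ i, ∑ j, ‖B₁ (e i) (e j)‖ ^ 2)
    (hsmall : Q < ((k : ℝ) - 4) / (Real.sqrt k + 4)) :
    ∀ x : EuclideanSpace ℝ (Fin k), ‖x‖ = 1 →
      (∑ i, (4 * ⟪B x (e i), B x (e i)⟫ - ⟪B x x, B (e i) (e i)⟫)) < 0 :=
  stmt_6_general E k ν hν B₁ hB₁perp B hB e he Q hQ hsmall
end

section
/- Let E be a real inner product space, k ≥ 1 a natural number, ν ∈ E a unit vector, Λ > 0 a real number, B₁ : EuclideanSpace ℝ (Fin k) → EuclideanSpace ℝ (Fin k) → E a symmetric bilinear map with ⟨B₁(u,v),ν⟩ = 0 for all u,v and with Σ_{i=1}^{k} B₁(e_i,e_i) = 0 (minimality), and b̃ : EuclideanSpace ℝ (Fin k) → EuclideanSpace ℝ (Fin k) → ℝ a symmetric bilinear form with 0 < b̃(y,y) ≤ Λ·‖y‖² for every y ≠ 0 (convexity and principal-curvature bound). Define B(u,v) := B₁(u,v) + b̃(u,v)·ν.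 If x is a unit vector with Σ_{i=1}^{k} (⟨B(x,x),B(e_i,e_i)⟩ − ⟨B(x,e_i),B(x,e_i)⟩) > (3/4)·k·Λ², then Σ_{i=1}^{k} (4·⟨B(x,e_i),B(x,e_i)⟩ − ⟨B(x,x),B(e_i,e_i)⟩) < 0. -/
open scoped RealInnerProductSpace

/-!
Minimality kills the tangential part of the trace of `B`, so `∑ᵢ B(eᵢ,eᵢ) = (tr b̃) ν` and
`∑ᵢ ⟪B(x,x), B(eᵢ,eᵢ)⟫ = b̃(x,x) · tr b̃ ≤ Λ · kΛ`. Writing `R = ∑ᵢ ⟪B(x,x), B(eᵢ,eᵢ)⟫ - ∑ᵢ ‖B(x,eᵢ)‖²`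
for the Ricci curvature, the Φ-SSU functional is `3 ∑ᵢ ⟪B(x,x), B(eᵢ,eᵢ)⟫ - 4R < 3kΛ² - 3kΛ² = 0`.
-/

section BilinearBound

variable {V : Type*} [NormedAddCommGroup V] [InnerProductSpace ℝ V]
  {b : V →ₗ[ℝ] V →ₗ[ℝ] ℝ} {Λ : ℝ}

theorem LinearMap.apply_self_le_of_norm_eq_one (hb : ∀ y : V, y ≠ 0 → b y y ≤ Λ * ‖y‖ ^ 2)
    {y : V} (hy : ‖y‖ = 1) : b y y ≤ Λ := by
  simpa [hy] using hb y (norm_ne_zero_iff.mp (by simp [hy]))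

theorem LinearMap.sum_apply_self_le {ι : Type*} [Fintype ι]
    (hb : ∀ y : V, y ≠ 0 → b y y ≤ Λ * ‖y‖ ^ 2) {e : ι → V} (he : ∀ i, ‖e i‖ = 1) :
    ∑ i, b (e i) (e i) ≤ Fintype.card ι * Λ :=
  (Finset.sum_le_sum fun i _ => b.apply_self_le_of_norm_eq_one hb (he i)).trans_eq (by simp)

end BilinearBound

section NormalDecomposition

variable {E : Type*} [NormedAddCommGroup E] [InnerProductSpace ℝ E] {ν : E}

theorem inner_add_smul_unit_of_inner_eq_zero {w : E} (hw : ⟪w, ν⟫ = 0) (hν : ‖ν‖ = 1) (c : ℝ) :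
    ⟪w + c • ν, ν⟫ = c := by
  rw [inner_add_left, hw, real_inner_smul_left, real_inner_self_eq_norm_sq, hν]
  ring

theorem sum_inner_apply_diag_eq {U ι : Type*} [Fintype ι] (B B₁ : U → U → E) (b : U → U → ℝ)
    (hB : ∀ u v, B u v = B₁ u v + b u v • ν) (hB₁perp : ∀ u v, ⟪B₁ u v, ν⟫ = 0)
    (hν : ‖ν‖ = 1) (e : ι → U) (hmin : ∑ i, B₁ (e i) (e i) = 0) (x : U) :
    ∑ i, ⟪B x x, B (e i) (e i)⟫ = b x x * ∑ i, b (e i) (e i) := by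
  have htrace : ∑ i, B (e i) (e i) = (∑ i, b (e i) (e i)) • ν := by
    simp only [hB, Finset.sum_add_distrib, hmin, zero_add, Finset.sum_smul]
  rw [← inner_sum, htrace, real_inner_smul_right, hB,
    inner_add_smul_unit_of_inner_eq_zero (hB₁perp x x) hν, mul_comm]

end NormalDecomposition

theorem stmt_7_general (E : Type*) [NormedAddCommGroup E] [InnerProductSpace ℝ E]
    (k : ℕ)
    (ν : E) (hν : ‖ν‖ = 1) (Lam : ℝ) (hLam : 0 < Lam)
    (B₁ : EuclideanSpace ℝ (Fin k) →ₗ[ℝ] EuclideanSpace ℝ (Fin k) →ₗ[ℝ] E)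
    (hB₁perp : ∀ u v, ⟪B₁ u v, ν⟫ = 0)
    (e : Fin k → EuclideanSpace ℝ (Fin k))
    (he : e = fun i => EuclideanSpace.single i (1 : ℝ))
    (hmin : (∑ i, B₁ (e i) (e i)) = 0)
    (btil : EuclideanSpace ℝ (Fin k) →ₗ[ℝ] EuclideanSpace ℝ (Fin k) →ₗ[ℝ] ℝ)
    (hbpos : ∀ y : EuclideanSpace ℝ (Fin k), y ≠ 0 → 0 < btil y y)
    (hbbound : ∀ y : EuclideanSpace ℝ (Fin k), y ≠ 0 → btil y y ≤ Lam * ‖y‖ ^ 2)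
    (B : EuclideanSpace ℝ (Fin k) → EuclideanSpace ℝ (Fin k) → E)
    (hB : ∀ u v, B u v = B₁ u v + btil u v • ν)
    (x : EuclideanSpace ℝ (Fin k)) (hx : ‖x‖ = 1)
    (hRic : (3 / 4 : ℝ) * k * Lam ^ 2 <
      ∑ i, (⟪B x x, B (e i) (e i)⟫ - ⟪B x (e i), B x (e i)⟫)) :
    (∑ i, (4 * ⟪B x (e i), B x (e i)⟫ - ⟪B x x, B (e i) (e i)⟫)) < 0 := by
  have he_norm : ∀ i, ‖e i‖ = 1 := by simp [he]
  have hmean := sum_inner_apply_diag_eq B (fun u v => B₁ u v) (fun u v => btil u v) hB hB₁perp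
    hν e hmin x
  have htrace : ∑ i, btil (e i) (e i) ≤ k * Lam := by
    simpa using btil.sum_apply_self_le hbbound he_norm
  have htrace_nonneg : 0 ≤ ∑ i, btil (e i) (e i) :=
    Finset.sum_nonneg fun i _ => (hbpos _ (norm_ne_zero_iff.mp (by simp [he_norm i]))).le
  have hmean_le : ∑ i, ⟪B x x, B (e i) (e i)⟫ ≤ k * Lam ^ 2 := by
    rw [hmean]
    calc btil x x * ∑ i, btil (e i) (e i) ≤ Lam * (k * Lam) :=
          mul_le_mul (btil.apply_self_le_of_norm_eq_one hbbound hx) htrace htrace_nonneg hLam.le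
      _ = k * Lam ^ 2 := by ring
  rw [Finset.sum_sub_distrib] at hRic
  rw [Finset.sum_sub_distrib, ← Finset.mul_sum]
  linarith

/-- Section 5 theorem on minimal submanifolds of convex hypersurfaces
(pointwise content): with `B = B₁ + b̃ ν`, `B₁` trace-free (minimality) and
`0 < b̃(y,y) ≤ Λ‖y‖²`, a Ricci bound `Ric(x) > (3/4) k Λ²` at a unit vector
`x` forces the Φ-SSU functional to be negative at `x`. -/
theorem stmt_7 (E : Type*) [NormedAddCommGroup E] [InnerProductSpace ℝ E]
    (k : ℕ) (hk : 1 ≤ k)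
    (ν : E) (hν : ‖ν‖ = 1) (Lam : ℝ) (hLam : 0 < Lam)
    (B₁ : EuclideanSpace ℝ (Fin k) →ₗ[ℝ] EuclideanSpace ℝ (Fin k) →ₗ[ℝ] E)
    (hB₁symm : ∀ u v, B₁ u v = B₁ v u)
    (hB₁perp : ∀ u v, ⟪B₁ u v, ν⟫ = 0)
    (e : Fin k → EuclideanSpace ℝ (Fin k))
    (he : e = fun i => EuclideanSpace.single i (1 : ℝ))
    (hmin : (∑ i, B₁ (e i) (e i)) = 0)
    (btil : EuclideanSpace ℝ (Fin k) →ₗ[ℝ] EuclideanSpace ℝ (Fin k) →ₗ[ℝ] ℝ)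
    (hbsymm : ∀ u v, btil u v = btil v u)
    (hbpos : ∀ y : EuclideanSpace ℝ (Fin k), y ≠ 0 → 0 < btil y y)
    (hbbound : ∀ y : EuclideanSpace ℝ (Fin k), y ≠ 0 → btil y y ≤ Lam * ‖y‖ ^ 2)
    (B : EuclideanSpace ℝ (Fin k) → EuclideanSpace ℝ (Fin k) → E)
    (hB : ∀ u v, B u v = B₁ u v + btil u v • ν)
    (x : EuclideanSpace ℝ (Fin k)) (hx : ‖x‖ = 1)
    (hRic : (3 / 4 : ℝ) * k * Lam ^ 2 <
      ∑ i, (⟪B x x, B (e i) (e i)⟫ - ⟪B x (e i), B x (e i)⟫)) :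
    (∑ i, (4 * ⟪B x (e i), B x (e i)⟫ - ⟪B x x, B (e i) (e i)⟫)) < 0 :=
  stmt_7_general E k ν hν Lam hLam B₁ hB₁perp e he hmin btil hbpos hbbound B hB x hx hRic
end

section
/- Let E be a real inner product space, k ≥ 1 a natural number, ν ∈ E a unit vector, and B₁ : EuclideanSpace ℝ (Fin k) → EuclideanSpace ℝ (Fin k) → E a symmetric bilinear map with ⟨B₁(u,v),ν⟩ = 0 for all u,v and with Σ_{i=1}^{k} B₁(e_i,e_i) = 0 (minimality in the unit sphere). Define B(u,v) := B₁(u,v) + ⟨u,v⟩·ν. If x is a unit vector with Σ_{i=1}^{k} (⟨B(x,x),B(e_i,e_i)⟩ − ⟨B(x,e_i),B(x,e_i)⟩) > (3/4)·k, then Σ_{i=1}^{k} (4·⟨B(x,e_i),B(x,e_i)⟩ − ⟨B(x,x),B(e_i,e_i)⟩) < 0. -/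
open scoped RealInnerProductSpace

/-! `4 Φ + 4 Ric = 3 ∑ ⟪B x x, B eᵢ eᵢ⟫` where `Φ` is the SSU functional; for a minimal submanifold
of the unit sphere the right-hand side is `3k`, because the trace of `B` is `k ν` and
`⟪B x x, ν⟫ = ‖x‖² = 1`. Hence `Ric(x) > 3k/4` forces `Φ(x) < 0`. -/

lemma sum_four_inner_sub_neg_of_lt_sum_inner_sub {V E ι : Type*} [NormedAddCommGroup E]
    [InnerProductSpace ℝ E] [Fintype ι]
    (B : V → V → E) (x : V) (e : ι → V) (c : ℝ)
    (htrace : ∑ i, ⟪B x x, B (e i) (e i)⟫ = c)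
    (hRic : (3 / 4 : ℝ) * c < ∑ i, (⟪B x x, B (e i) (e i)⟫ - ⟪B x (e i), B x (e i)⟫)) :
    ∑ i, (4 * ⟪B x (e i), B x (e i)⟫ - ⟪B x x, B (e i) (e i)⟫) < 0 := by
  rw [Finset.sum_sub_distrib] at hRic ⊢
  rw [← Finset.mul_sum]
  linarith

lemma sum_inner_diag_eq_card {V E ι : Type*} [NormedAddCommGroup V] [InnerProductSpace ℝ V]
    [NormedAddCommGroup E] [InnerProductSpace ℝ E] [Fintype ι] (ν : E) (hν : ‖ν‖ = 1)
    (B₁ B : V → V → E) (hB : ∀ u v, B u v = B₁ u v + ⟪u, v⟫ • ν)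
    (e : ι → V) (he : ∀ i, ‖e i‖ = 1) (hmin : ∑ i, B₁ (e i) (e i) = 0)
    (x : V) (hx : ‖x‖ = 1) (hperp : ⟪B₁ x x, ν⟫ = 0) :
    ∑ i, ⟪B x x, B (e i) (e i)⟫ = Fintype.card ι := by
  have htrace : ∑ i, B (e i) (e i) = (Fintype.card ι : ℝ) • ν := by
    simp [hB, Finset.sum_add_distrib, hmin, he, Nat.cast_smul_eq_nsmul]
  rw [← inner_sum, htrace, real_inner_smul_right, hB, inner_add_left, hperp,
    real_inner_smul_left, real_inner_self_eq_norm_sq, real_inner_self_eq_norm_sq, hx, hν]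
  ring

theorem stmt_8_general (E : Type*) [NormedAddCommGroup E] [InnerProductSpace ℝ E]
    (k : ℕ)
    (ν : E) (hν : ‖ν‖ = 1)
    (B₁ : EuclideanSpace ℝ (Fin k) →ₗ[ℝ] EuclideanSpace ℝ (Fin k) →ₗ[ℝ] E)
    (hB₁perp : ∀ u v, ⟪B₁ u v, ν⟫ = 0)
    (e : Fin k → EuclideanSpace ℝ (Fin k))
    (he : e = fun i => EuclideanSpace.single i (1 : ℝ))
    (hmin : (∑ i, B₁ (e i) (e i)) = 0)
    (B : EuclideanSpace ℝ (Fin k) → EuclideanSpace ℝ (Fin k) → E)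
    (hB : ∀ u v, B u v = B₁ u v + ⟪u, v⟫ • ν)
    (x : EuclideanSpace ℝ (Fin k)) (hx : ‖x‖ = 1)
    (hRic : (3 / 4 : ℝ) * k <
      ∑ i, (⟪B x x, B (e i) (e i)⟫ - ⟪B x (e i), B x (e i)⟫)) :
    (∑ i, (4 * ⟪B x (e i), B x (e i)⟫ - ⟪B x x, B (e i) (e i)⟫)) < 0 := by
  have he_norm : ∀ i, ‖e i‖ = 1 := by simp [he]
  have htrace := sum_inner_diag_eq_card ν hν (fun u v => B₁ u v) B hB e he_norm hmin x hx
    (hB₁perp x x)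
  rw [Fintype.card_fin] at htrace
  exact sum_four_inner_sub_neg_of_lt_sum_inner_sub B x e k htrace hRic

/-- Corollary 5.4 (pointwise content): for a minimal `k`-submanifold of the
unit sphere (so `B u v = B₁ u v + ⟪u,v⟫ ν` with `B₁` trace-free), a Ricci
bound `Ric(x) > (3/4) k` at a unit vector `x` forces the Φ-SSU functional to
be negative at `x`. -/
theorem stmt_8 (E : Type*) [NormedAddCommGroup E] [InnerProductSpace ℝ E]
    (k : ℕ) (hk : 1 ≤ k)
    (ν : E) (hν : ‖ν‖ = 1)
    (B₁ : EuclideanSpace ℝ (Fin k) →ₗ[ℝ] EuclideanSpace ℝ (Fin k) →ₗ[ℝ] E)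
    (hB₁symm : ∀ u v, B₁ u v = B₁ v u)
    (hB₁perp : ∀ u v, ⟪B₁ u v, ν⟫ = 0)
    (e : Fin k → EuclideanSpace ℝ (Fin k))
    (he : e = fun i => EuclideanSpace.single i (1 : ℝ))
    (hmin : (∑ i, B₁ (e i) (e i)) = 0)
    (B : EuclideanSpace ℝ (Fin k) → EuclideanSpace ℝ (Fin k) → E)
    (hB : ∀ u v, B u v = B₁ u v + ⟪u, v⟫ • ν)
    (x : EuclideanSpace ℝ (Fin k)) (hx : ‖x‖ = 1)
    (hRic : (3 / 4 : ℝ) * k <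
      ∑ i, (⟪B x x, B (e i) (e i)⟫ - ⟪B x (e i), B x (e i)⟫)) :
    (∑ i, (4 * ⟪B x (e i), B x (e i)⟫ - ⟪B x x, B (e i) (e i)⟫)) < 0 :=
  stmt_8_general E k ν hν B₁ hB₁perp e he hmin B hB x hx hRic
end
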